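/- arXiv:2404.17708 — 5 statements merged into one kernel-verified Lean document; each statement's English description precedes it below -/
import Mathlib

section
/- Let (g,[·,·]) be a Lie algebra and n: g → g a linear map. Then the deformed bracket [ξ₁,ξ₂]_n = [nξ₁,ξ₂] + [ξ₁,nξ₂] − n[ξ₁,ξ₂] satisfies the Jacobi identity (i.e. defines a Lie bracket) if and only if the Nijenhuis torsion T(n) is a 2-cocycle for the Chevalley–Eilenberg cohomology with values in the adjoint representation. -/
/-!
Expanding `[[x, y]_n, z]_n` and writing `n [x, y]_n = T(x, y) + [n x, n y]` gives
`[T(x, y), z] + T([x, y], z)` plus terms whose cyclic sum vanishes by the Jacobi identity of `g`,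
so the Jacobiator of `[·,·]_n` is the cyclic sum of `[T(x, y), z] + T([x, y], z)`. Since `T` is
skew-symmetric, that cyclic sum is exactly `-dT(x, y, z)`.
-/

section

variable {L F : Type*} [LieRing L] [FunLike F L L] [AddMonoidHomClass F L L]

theorem lie_lie_add_lie_lie_add_lie_lie (x y z : L) :
    ⁅⁅x, y⁆, z⁆ + ⁅⁅y, z⁆, x⁆ + ⁅⁅z, x⁆, y⁆ = 0 := by
  calc ⁅⁅x, y⁆, z⁆ + ⁅⁅y, z⁆, x⁆ + ⁅⁅z, x⁆, y⁆
      = -(⁅x, ⁅y, z⁆⁆ + ⁅y, ⁅z, x⁆⁆ + ⁅z, ⁅x, y⁆⁆) := by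
        rw [← lie_skew ⁅x, y⁆ z, ← lie_skew ⁅y, z⁆ x, ← lie_skew ⁅z, x⁆ y]
        abel
    _ = 0 := by rw [lie_jacobi, neg_zero]

def jacobiator (b : L → L → L) (x y z : L) : L :=
  b (b x y) z + b (b z x) y + b (b y z) x

def lieTwoCochainDifferential (c : L → L → L) (x y z : L) : L :=
  ⁅x, c y z⁆ - ⁅y, c x z⁆ + ⁅z, c x y⁆ - c ⁅x, y⁆ z + c ⁅x, z⁆ y - c ⁅y, z⁆ x

theorem lieTwoCochainDifferential_eq_neg_cyclic_sum {c : L → L → L}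
    (hc_swap : ∀ x y, c y x = -c x y) (hc_neg : ∀ x y, c (-x) y = -c x y) (x y z : L) :
    lieTwoCochainDifferential c x y z =
      -((⁅c x y, z⁆ + c ⁅x, y⁆ z) + (⁅c z x, y⁆ + c ⁅z, x⁆ y) + (⁅c y z, x⁆ + c ⁅y, z⁆ x)) := by
  rw [lieTwoCochainDifferential, hc_swap x z, neg_lie, ← lie_skew x z, hc_neg,
    ← lie_skew (c x y) z, ← lie_skew (c x z) y, ← lie_skew (c y z) x]
  abel

variable (n : F)

def deformedBracket (x y : L) : L := ⁅n x, y⁆ + ⁅x, n y⁆ - n ⁅x, y⁆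

def nijenhuisTorsion (x y : L) : L := n (deformedBracket n x y) - ⁅n x, n y⁆

theorem deformedBracket_swap (x y : L) : deformedBracket n y x = -deformedBracket n x y := by
  simp only [deformedBracket, ← lie_skew x, ← lie_skew (n x), map_neg]
  abel

theorem nijenhuisTorsion_swap (x y : L) : nijenhuisTorsion n y x = -nijenhuisTorsion n x y := by
  rw [nijenhuisTorsion, nijenhuisTorsion, deformedBracket_swap, map_neg, ← lie_skew, neg_sub',
    sub_neg_eq_add, neg_add_eq_sub]

theorem nijenhuisTorsion_neg_left (x y : L) :
    nijenhuisTorsion n (-x) y = -nijenhuisTorsion n x y := by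
  simp only [nijenhuisTorsion, deformedBracket, map_neg, neg_lie, map_sub, map_add]
  abel

theorem deformedBracket_deformedBracket (x y z : L) :
    deformedBracket n (deformedBracket n x y) z =
      ⁅nijenhuisTorsion n x y, z⁆ + nijenhuisTorsion n ⁅x, y⁆ z
        + (⁅⁅n x, n y⁆, z⁆ + ⁅⁅n x, y⁆, n z⁆ + ⁅⁅x, n y⁆, n z⁆)
        - n (⁅⁅n x, y⁆, z⁆ + ⁅⁅x, n y⁆, z⁆ + ⁅⁅x, y⁆, n z⁆) + n (n ⁅⁅x, y⁆, z⁆) := by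
  simp only [nijenhuisTorsion, deformedBracket, map_add, map_sub, add_lie, sub_lie]
  abel

theorem jacobiator_deformedBracket (x y z : L) :
    jacobiator (deformedBracket n) x y z =
      (⁅nijenhuisTorsion n x y, z⁆ + nijenhuisTorsion n ⁅x, y⁆ z)
        + (⁅nijenhuisTorsion n z x, y⁆ + nijenhuisTorsion n ⁅z, x⁆ y)
        + (⁅nijenhuisTorsion n y z, x⁆ + nijenhuisTorsion n ⁅y, z⁆ x) := by
  -- the terms left over regroup into seven instances of the Jacobi identity
  calc jacobiator (deformedBracket n) x y z
      = (⁅nijenhuisTorsion n x y, z⁆ + nijenhuisTorsion n ⁅x, y⁆ z)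
        + (⁅nijenhuisTorsion n z x, y⁆ + nijenhuisTorsion n ⁅z, x⁆ y)
        + (⁅nijenhuisTorsion n y z, x⁆ + nijenhuisTorsion n ⁅y, z⁆ x)
        + ((⁅⁅n x, n y⁆, z⁆ + ⁅⁅n y, z⁆, n x⁆ + ⁅⁅z, n x⁆, n y⁆)
          + (⁅⁅n z, n x⁆, y⁆ + ⁅⁅n x, y⁆, n z⁆ + ⁅⁅y, n z⁆, n x⁆)
          + (⁅⁅n y, n z⁆, x⁆ + ⁅⁅n z, x⁆, n y⁆ + ⁅⁅x, n y⁆, n z⁆))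
        - n ((⁅⁅n x, y⁆, z⁆ + ⁅⁅y, z⁆, n x⁆ + ⁅⁅z, n x⁆, y⁆)
          + (⁅⁅n y, z⁆, x⁆ + ⁅⁅z, x⁆, n y⁆ + ⁅⁅x, n y⁆, z⁆)
          + (⁅⁅n z, x⁆, y⁆ + ⁅⁅x, y⁆, n z⁆ + ⁅⁅y, n z⁆, x⁆))
        + n (n (⁅⁅x, y⁆, z⁆ + ⁅⁅y, z⁆, x⁆ + ⁅⁅z, x⁆, y⁆)) := by
        simp only [jacobiator, deformedBracket_deformedBracket, map_add]
        abel
    _ = _ := by simp only [lie_lie_add_lie_lie_add_lie_lie, add_zero, map_zero, sub_zero]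

end

/-- The deformed bracket `[·,·]_n` satisfies the Jacobi identity iff the
Nijenhuis torsion of `n` is a 2-cocycle for the Chevalley–Eilenberg cohomology
with values in the adjoint representation. -/
theorem deformed_jacobi_iff_torsion_two_cocycle
    {g : Type*} [LieRing g] [LieAlgebra ℝ g]
    (n : g →ₗ[ℝ] g)
    (nbr : g → g → g)
    (hnbr : ∀ x y, nbr x y = ⁅n x, y⁆ + ⁅x, n y⁆ - n ⁅x, y⁆)
    (T : g → g → g)
    (hT : ∀ x y, T x y = n (nbr x y) - ⁅n x, n y⁆) :
    (∀ x y z, nbr (nbr x y) z + nbr (nbr z x) y + nbr (nbr y z) x = 0) ↔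
    (∀ x y z,
      ⁅x, T y z⁆ - ⁅y, T x z⁆ + ⁅z, T x y⁆
        - T ⁅x, y⁆ z + T ⁅x, z⁆ y - T ⁅y, z⁆ x = 0) := by
  obtain rfl : nbr = deformedBracket n := funext₂ hnbr
  obtain rfl : T = nijenhuisTorsion n := funext₂ hT
  have differential_torsion (x y z : g) : lieTwoCochainDifferential (nijenhuisTorsion n) x y z =
      -jacobiator (deformedBracket n) x y z := by
    rw [lieTwoCochainDifferential_eq_neg_cyclic_sum (nijenhuisTorsion_swap n)
      (nijenhuisTorsion_neg_left n), jacobiator_deformedBracket]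
  refine forall₃_congr fun x y z => ?_
  rw [← jacobiator, ← lieTwoCochainDifferential, differential_torsion, neg_eq_zero]
end

section
/- Let n be a Nijenhuis operator on a Lie algebra (g,[·,·]). Then for every natural number k ≥ 1, \underline{ad}_{n^k ξ} = n^k ∘ \underline{ad}_ξ for all ξ ∈ g, where \underline{ad}_ξ = ad_ξ ∘ n − n ∘ ad_ξ. -/
def underlineAd {R g : Type*} [CommRing R] [LieRing g] [Module R g]
    (n : Module.End R g) (ξ ζ : g) : g :=
  ⁅ξ, n ζ⁆ - n ⁅ξ, ζ⁆

section Nijenhuis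

variable {R g : Type*} [CommRing R] [LieRing g] [Module R g] {n : Module.End R g}

theorem underlineAd_apply_self
    (hN : ∀ x y, n (⁅n x, y⁆ + ⁅x, n y⁆ - n ⁅x, y⁆) = ⁅n x, n y⁆) (ξ ζ : g) :
    underlineAd n (n ξ) ζ = n (underlineAd n ξ ζ) := by
  rw [underlineAd, underlineAd, ← hN, map_sub, map_add, map_sub]
  abel

theorem underlineAd_pow_apply
    (hN : ∀ x y, n (⁅n x, y⁆ + ⁅x, n y⁆ - n ⁅x, y⁆) = ⁅n x, n y⁆) (k : ℕ) (ξ ζ : g) :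
    underlineAd n ((n ^ k) ξ) ζ = (n ^ k) (underlineAd n ξ ζ) := by
  induction k generalizing ξ with
  | zero => rfl
  | succ k ih =>
    rw [pow_succ, Module.End.mul_apply, Module.End.mul_apply, ih, underlineAd_apply_self hN]

end Nijenhuis

/-- For a Nijenhuis operator `n` and every `k ≥ 1`,
`\underline{ad}_{n^k ξ} = n^k ∘ \underline{ad}_ξ`. -/
theorem underline_ad_pow
    {g : Type*} [LieRing g] [LieAlgebra ℝ g]
    (n : Module.End ℝ g)
    (hN : ∀ x y, n (⁅n x, y⁆ + ⁅x, n y⁆ - n ⁅x, y⁆) = ⁅n x, n y⁆) :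
    ∀ k : ℕ, 1 ≤ k → ∀ ξ ζ : g,
      ⁅(n ^ k) ξ, n ζ⁆ - n ⁅(n ^ k) ξ, ζ⁆ = (n ^ k) (⁅ξ, n ζ⁆ - n ⁅ξ, ζ⁆) :=
  fun k _ ξ ζ => underlineAd_pow_apply hN k ξ ζ
end

section
/- Let n be a Nijenhuis operator on a Lie algebra (g,[·,·]), and denote [·,·]_i the bracket deformed by n^i. Then for all integers k, i ≥ 0 and ξ₁,ξ₂ ∈ g: n^i [ξ₁,ξ₂]_{k+i} = [n^i ξ₁, n^i ξ₂]_k, where [ξ₁,ξ₂]_j = [n^jξ₁,ξ₂] + [ξ₁,n^jξ₂] − n^j[ξ₁,ξ₂] and [·,·]_0 = [·,·]. -/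
/-! The heart is the case `i = 1`, `n [x, y]_{j+1} = [n x, n y]_j`, proved by induction on `j`:
the difference of the two sides is the sum of the torsion identities at `(n^{j+1} x, y)` and
`(x, n^{j+1} y)` and of `n` applied to the case `j`. Iterating it `i` times gives the theorem. -/

namespace LieAlgebra

variable {R L : Type*} [CommRing R] [LieRing L] [LieAlgebra R L]

def deformedBracket (T : Module.End R L) (x y : L) : L :=
  ⁅T x, y⁆ + ⁅x, T y⁆ - T ⁅x, y⁆

def IsNijenhuis (n : Module.End R L) : Prop :=
  ∀ x y, n (deformedBracket n x y) = ⁅n x, n y⁆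

namespace IsNijenhuis

variable {n : Module.End R L}

theorem map_deformedBracket_pow_succ (hn : IsNijenhuis n) (j : ℕ) (x y : L) :
    n (deformedBracket (n ^ (j + 1)) x y) = deformedBracket (n ^ j) (n x) (n y) := by
  induction j generalizing x y with
  | zero => simpa [deformedBracket] using hn x y
  | succ j ih =>
    have commute_pow (z : L) : n ((n ^ j) z) = (n ^ j) (n z) :=
      congrArg (· z) (Commute.self_pow n j).eq
    have hx := hn ((n ^ (j + 1)) x) y
    have hy := hn x ((n ^ (j + 1)) y)
    have hprev := congrArg n (ih x y)
    simp only [deformedBracket, pow_succ, Module.End.mul_apply, map_add, map_sub,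
      commute_pow] at hx hy hprev ⊢
    linear_combination (norm := abel) hx + hy + hprev

theorem pow_map_deformedBracket_pow_add (hn : IsNijenhuis n) (k i : ℕ) (x y : L) :
    (n ^ i) (deformedBracket (n ^ (k + i)) x y) =
      deformedBracket (n ^ k) ((n ^ i) x) ((n ^ i) y) := by
  induction i generalizing x y with
  | zero => simp
  | succ i ih =>
    rw [← add_assoc, pow_succ n i, Module.End.mul_apply, hn.map_deformedBracket_pow_succ, ih,
      ← Module.End.mul_apply, ← Module.End.mul_apply]

end IsNijenhuis

end LieAlgebra

/-- For a Nijenhuis operator `n`, `n^i [ξ₁,ξ₂]_{k+i} = [n^i ξ₁, n^i ξ₂]_k`,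
where `[·,·]_j` is the bracket deformed by `n^j`. -/
theorem pow_deformed_bracket
    {g : Type*} [LieRing g] [LieAlgebra ℝ g]
    (n : Module.End ℝ g)
    (hN : ∀ x y, n (⁅n x, y⁆ + ⁅x, n y⁆ - n ⁅x, y⁆) = ⁅n x, n y⁆)
    (br : ℕ → g → g → g)
    (hbr : ∀ j x y, br j x y = ⁅(n ^ j) x, y⁆ + ⁅x, (n ^ j) y⁆ - (n ^ j) ⁅x, y⁆) :
    ∀ (k i : ℕ) (ξ₁ ξ₂ : g),
      (n ^ i) (br (k + i) ξ₁ ξ₂) = br k ((n ^ i) ξ₁) ((n ^ i) ξ₂) := by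
  obtain rfl : br = fun j => LieAlgebra.deformedBracket (n ^ j) := funext fun j => funext₂ (hbr j)
  exact LieAlgebra.IsNijenhuis.pow_map_deformedBracket_pow_add hN
end

section
/- Let (g,[·,·]) be a finite-dimensional Lie algebra and r, r' ∈ ∧²g two solutions of the classical Yang–Baxter equation with r non-degenerate (𝚛: g* → g an isomorphism). If r and r' are compatible, i.e. ⟦r',r⟧ = 0, then the linear map n = 𝚛' ∘ 𝚛^{−1}: g → g is a Nijenhuis operator on g, i.e. [nξ₁,nξ₂] = n([nξ₁,ξ₂] + [ξ₁,nξ₂] − n[ξ₁,ξ₂]) for all ξ₁,ξ₂ ∈ g. -/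
/-!
Write `[η₁, η₂]_A` for the bracket on the dual induced by a skew map `A : 𝔤* → 𝔤`. Pairing with a
third covector and using skewness, the classical Yang–Baxter equation for `A` is exactly
`⁅A η₁, A η₂⁆ = A [η₁, η₂]_A`. Since `[η₁, η₂]_A` is linear in `A`, applying this to `r`, `r'` and
`r + r'` gives the mixed identity `⁅r η₁, r' η₂⁆ + ⁅r' η₁, r η₂⁆ = r [η₁, η₂]_{r'} + r' [η₁, η₂]_r`.
With `ξᵢ = r ηᵢ` and `n ∘ r = r'`, both sides of the Nijenhuis identity then reduce to
`n (r [η₁, η₂]_{r'})`.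
-/

open LieAlgebra

section DualBracket

variable {K L : Type*} [Field K] [LieRing L] [LieAlgebra K L]

def IsSkew (A : Module.Dual K L →ₗ[K] L) : Prop :=
  ∀ η₁ η₂ : Module.Dual K L, η₂ (A η₁) = - η₁ (A η₂)

def SatisfiesCYBE (A : Module.Dual K L →ₗ[K] L) : Prop :=
  ∀ η₁ η₂ η₃ : Module.Dual K L,
    η₁ ⁅A η₂, A η₃⁆ - η₂ ⁅A η₁, A η₃⁆ + η₃ ⁅A η₁, A η₂⁆ = 0

noncomputable def dualBracket (A : Module.Dual K L →ₗ[K] L) (η₁ η₂ : Module.Dual K L) :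
    Module.Dual K L :=
  η₁ ∘ₗ ad K L (A η₂) - η₂ ∘ₗ ad K L (A η₁)

@[simp]
lemma dualBracket_apply (A : Module.Dual K L →ₗ[K] L) (η₁ η₂ : Module.Dual K L) (ξ : L) :
    dualBracket A η₁ η₂ ξ = η₁ ⁅A η₂, ξ⁆ - η₂ ⁅A η₁, ξ⁆ :=
  rfl

lemma dualBracket_add (A B : Module.Dual K L →ₗ[K] L) (η₁ η₂ : Module.Dual K L) :
    dualBracket (A + B) η₁ η₂ = dualBracket A η₁ η₂ + dualBracket B η₁ η₂ := by
  ext ξ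
  simp only [dualBracket_apply, LinearMap.add_apply, add_lie, map_add]
  ring

lemma IsSkew.add {A B : Module.Dual K L →ₗ[K] L} (hA : IsSkew A) (hB : IsSkew B) :
    IsSkew (A + B) := by
  intro η₁ η₂
  simp only [LinearMap.add_apply, map_add, hA η₁ η₂, hB η₁ η₂, neg_add]

lemma SatisfiesCYBE.lie_eq {A : Module.Dual K L →ₗ[K] L} (hskew : IsSkew A)
    (hA : SatisfiesCYBE A) (η₁ η₂ : Module.Dual K L) :
    ⁅A η₁, A η₂⁆ = A (dualBracket A η₁ η₂) := by
  rw [← sub_eq_zero, ← Module.forall_dual_apply_eq_zero_iff K]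
  intro η₃
  have hpair : η₃ (A (dualBracket A η₁ η₂)) = η₂ ⁅A η₁, A η₃⁆ - η₁ ⁅A η₂, A η₃⁆ := by
    rw [hskew, dualBracket_apply, ← lie_skew (A η₁), ← lie_skew (A η₂), map_neg, map_neg]
    ring
  rw [map_sub, hpair]
  linear_combination hA η₁ η₂ η₃

lemma SatisfiesCYBE.lie_add_lie_eq {A B : Module.Dual K L →ₗ[K] L}
    (hsA : IsSkew A) (hsB : IsSkew B)
    (hA : SatisfiesCYBE A) (hB : SatisfiesCYBE B) (hAB : SatisfiesCYBE (A + B))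
    (η₁ η₂ : Module.Dual K L) :
    ⁅A η₁, B η₂⁆ + ⁅B η₁, A η₂⁆ = A (dualBracket B η₁ η₂) + B (dualBracket A η₁ η₂) := by
  have hsum := hAB.lie_eq (hsA.add hsB) η₁ η₂
  rw [dualBracket_add, LinearMap.add_apply, LinearMap.add_apply, LinearMap.add_apply,
    add_lie, lie_add, lie_add, map_add, map_add, hA.lie_eq hsA, hB.lie_eq hsB] at hsum
  rw [← sub_eq_zero] at hsum ⊢
  rw [← hsum]
  abel

end DualBracket

theorem compatible_r_matrices_give_nijenhuis_general
    {g : Type*} [LieRing g] [LieAlgebra ℝ g]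
    (rmap rmap' : Module.Dual ℝ g →ₗ[ℝ] g)
    (hskew : ∀ η₁ η₂ : Module.Dual ℝ g, η₂ (rmap η₁) = - η₁ (rmap η₂))
    (hskew' : ∀ η₁ η₂ : Module.Dual ℝ g, η₂ (rmap' η₁) = - η₁ (rmap' η₂))
    -- ⟦r,r⟧ = 0
    (hr : ∀ η₁ η₂ η₃ : Module.Dual ℝ g,
      η₁ ⁅rmap η₂, rmap η₃⁆ - η₂ ⁅rmap η₁, rmap η₃⁆ + η₃ ⁅rmap η₁, rmap η₂⁆ = 0)
    -- ⟦r',r'⟧ = 0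
    (hr' : ∀ η₁ η₂ η₃ : Module.Dual ℝ g,
      η₁ ⁅rmap' η₂, rmap' η₃⁆ - η₂ ⁅rmap' η₁, rmap' η₃⁆ + η₃ ⁅rmap' η₁, rmap' η₂⁆ = 0)
    -- compatibility ⟦r',r⟧ = 0, via ⟦r+r',r+r'⟧ − ⟦r,r⟧ − ⟦r',r'⟧ = 0
    (hcomp : ∀ η₁ η₂ η₃ : Module.Dual ℝ g,
      η₁ ⁅(rmap + rmap') η₂, (rmap + rmap') η₃⁆
        - η₂ ⁅(rmap + rmap') η₁, (rmap + rmap') η₃⁆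
        + η₃ ⁅(rmap + rmap') η₁, (rmap + rmap') η₂⁆ = 0)
    -- non-degeneracy of r
    (hbij : Function.Bijective rmap)
    (n : g →ₗ[ℝ] g)
    (hn : ∀ η, n (rmap η) = rmap' η) :
    ∀ ξ₁ ξ₂ : g, ⁅n ξ₁, n ξ₂⁆ = n (⁅n ξ₁, ξ₂⁆ + ⁅ξ₁, n ξ₂⁆ - n ⁅ξ₁, ξ₂⁆) := by
  intro ξ₁ ξ₂
  obtain ⟨η₁, rfl⟩ := hbij.2 ξ₁
  obtain ⟨η₂, rfl⟩ := hbij.2 ξ₂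
  have hmixed : ⁅rmap' η₁, rmap η₂⁆ + ⁅rmap η₁, rmap' η₂⁆
      = rmap (dualBracket rmap' η₁ η₂) + rmap' (dualBracket rmap η₁ η₂) := by
    rw [add_comm ⁅rmap' η₁, _⁆]
    exact SatisfiesCYBE.lie_add_lie_eq hskew hskew' hr hr' hcomp η₁ η₂
  rw [hn, hn, hmixed, SatisfiesCYBE.lie_eq hskew hr, SatisfiesCYBE.lie_eq hskew' hr', hn,
    ← hn, add_sub_cancel_right]

/-- If `r, r'` are compatible solutions of the classical Yang–Baxter equation
with `r` non-degenerate, then `n = 𝚛' ∘ 𝚛⁻¹` is a Nijenhuis operator. -/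
theorem compatible_r_matrices_give_nijenhuis
    {g : Type*} [LieRing g] [LieAlgebra ℝ g] [FiniteDimensional ℝ g]
    (rmap rmap' : Module.Dual ℝ g →ₗ[ℝ] g)
    (hskew : ∀ η₁ η₂ : Module.Dual ℝ g, η₂ (rmap η₁) = - η₁ (rmap η₂))
    (hskew' : ∀ η₁ η₂ : Module.Dual ℝ g, η₂ (rmap' η₁) = - η₁ (rmap' η₂))
    -- ⟦r,r⟧ = 0
    (hr : ∀ η₁ η₂ η₃ : Module.Dual ℝ g,
      η₁ ⁅rmap η₂, rmap η₃⁆ - η₂ ⁅rmap η₁, rmap η₃⁆ + η₃ ⁅rmap η₁, rmap η₂⁆ = 0)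
    -- ⟦r',r'⟧ = 0
    (hr' : ∀ η₁ η₂ η₃ : Module.Dual ℝ g,
      η₁ ⁅rmap' η₂, rmap' η₃⁆ - η₂ ⁅rmap' η₁, rmap' η₃⁆ + η₃ ⁅rmap' η₁, rmap' η₂⁆ = 0)
    -- compatibility ⟦r',r⟧ = 0, via ⟦r+r',r+r'⟧ − ⟦r,r⟧ − ⟦r',r'⟧ = 0
    (hcomp : ∀ η₁ η₂ η₃ : Module.Dual ℝ g,
      η₁ ⁅(rmap + rmap') η₂, (rmap + rmap') η₃⁆
        - η₂ ⁅(rmap + rmap') η₁, (rmap + rmap') η₃⁆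
        + η₃ ⁅(rmap + rmap') η₁, (rmap + rmap') η₂⁆ = 0)
    -- non-degeneracy of r
    (hbij : Function.Bijective rmap)
    (n : g →ₗ[ℝ] g)
    (hn : ∀ η, n (rmap η) = rmap' η) :
    ∀ ξ₁ ξ₂ : g, ⁅n ξ₁, n ξ₂⁆ = n (⁅n ξ₁, ξ₂⁆ + ⁅ξ₁, n ξ₂⁆ - n ⁅ξ₁, ξ₂⁆) :=
  compatible_r_matrices_give_nijenhuis_general rmap rmap' hskew hskew' hr hr' hcomp hbij n hn
end

section
/- Let (g,[·,·],δ) be a Lie bialgebra (δ: g → ∧²g a 1-cocycle for ad^{(2)} whose transpose is a Lie bracket on g*) and n: g → g a Nijenhuis operator. Define δ_{ᵗn} = ι_{ᵗn}∘δ − δ∘n. Then δ_{ᵗn} is a 1-cocycle for ad^{(2)} of (g,[·,·]) if and only if δ is a 1-cocycle in the deformed cohomology, i.e. for all ξ₁,ξ₂ ∈ g: ι_{[ᵗn,ad*_{ξ₁}]} δ(ξ₂) − ι_{[ᵗn,ad*_{ξ₂}]} δ(ξ₁) + ad^{(2)}_{nξ₁}δ(ξ₂) − ad^{(2)}_{nξ₂}δ(ξ₁)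 − δ([ξ₁,ξ₂]_n) = 0. -/
/-!
Write `ι_φ P (η₁, η₂) = P (φ η₁, η₂) + P (η₁, φ η₂)`, so that `ad^{(2)}_ξ = ι_{ad*_ξ}`, and let
`∂` be the Chevalley–Eilenberg coboundary of `g`-cochains with values in bilinear forms on `g*`.
Expanding both sides by linearity of `δ` gives the identity
`∂(ι_{ᵗn} ∘ δ − δ ∘ n)(ξ₁, ξ₂) = ∂_n δ(ξ₁, ξ₂) + ι_{ᵗn} (∂δ(ξ₁, ξ₂)) − ∂δ(n ξ₁, ξ₂) − ∂δ(ξ₁, n ξ₂)`,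
where `∂_n` is the deformed coboundary. When `∂δ = 0` the right side vanishes, so `δ_{ᵗn}` is a
cocycle exactly when `δ` is a deformed cocycle.
-/

namespace BilinearCochain

variable {R g V : Type*} [CommRing R] [Bracket g g]

def insertion (φ : V → V) (P : V → V → R) : V → V → R :=
  fun η₁ η₂ => P (φ η₁) η₂ + P η₁ (φ η₂)

@[simp]
theorem insertion_zero (φ : V → V) : insertion φ (0 : V → V → R) = 0 := by
  funext η₁ η₂
  simp [insertion]

def coboundary (ρ : g → V → V) (c : g → V → V → R) (ξ₁ ξ₂ : g) : V → V → R :=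
  insertion (ρ ξ₁) (c ξ₂) - insertion (ρ ξ₂) (c ξ₁) - c ⁅ξ₁, ξ₂⁆

def IsCocycle (ρ : g → V → V) (c : g → V → V → R) : Prop :=
  ∀ (ξ₁ ξ₂ : g) (η₁ η₂ : V), c ⁅ξ₁, ξ₂⁆ η₁ η₂
    = c ξ₂ (ρ ξ₁ η₁) η₂ + c ξ₂ η₁ (ρ ξ₁ η₂) - c ξ₁ (ρ ξ₂ η₁) η₂ - c ξ₁ η₁ (ρ ξ₂ η₂)

theorem isCocycle_iff_coboundary_eq_zero (ρ : g → V → V) (c : g → V → V → R) :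
    IsCocycle ρ c ↔ ∀ ξ₁ ξ₂, coboundary ρ c ξ₁ ξ₂ = 0 := by
  simp only [IsCocycle, funext_iff, coboundary, insertion, Pi.sub_apply, Pi.zero_apply]
  refine forall₄_congr fun ξ₁ ξ₂ η₁ η₂ => ⟨fun h => ?_, fun h => ?_⟩ <;> linear_combination -h

variable [AddCommGroup g] [AddCommGroup V]

def deformedBracket (n : g → g) (ξ₁ ξ₂ : g) : g :=
  ⁅n ξ₁, ξ₂⁆ + ⁅ξ₁, n ξ₂⁆ - n ⁅ξ₁, ξ₂⁆

/-- For `t = ᵗn` this is `δ_{ᵗn}`. -/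
def twist (t : V → V) (n : g → g) (c : g → V → V → R) (ξ : g) : V → V → R :=
  insertion t (c ξ) - c (n ξ)

def deformedCoboundary (ρ : g → V → V) (t : V → V) (n : g → g) (c : g → V → V → R)
    (ξ₁ ξ₂ : g) : V → V → R :=
  insertion (fun η => t (ρ ξ₁ η) - ρ ξ₁ (t η)) (c ξ₂)
    - insertion (fun η => t (ρ ξ₂ η) - ρ ξ₂ (t η)) (c ξ₁)
    + insertion (ρ (n ξ₁)) (c ξ₂) - insertion (ρ (n ξ₂)) (c ξ₁)
    - c (deformedBracket n ξ₁ ξ₂)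

def IsDeformedCocycle (ρ : g → V → V) (t : V → V) (n : g → g) (c : g → V → V → R) : Prop :=
  ∀ (ξ₁ ξ₂ : g) (η₁ η₂ : V), deformedCoboundary ρ t n c ξ₁ ξ₂ η₁ η₂ = 0

variable [Module R g] [Module R V]
  (ρ : g → V → V) (t : V → V) (n : g → g) (δ : g →ₗ[R] V →ₗ[R] V →ₗ[R] R)

theorem coboundary_twist (ξ₁ ξ₂ : g) :
    coboundary ρ (twist t n fun ξ η₁ η₂ => δ ξ η₁ η₂) ξ₁ ξ₂
      = deformedCoboundary ρ t n (fun ξ η₁ η₂ => δ ξ η₁ η₂) ξ₁ ξ₂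
        + insertion t (coboundary ρ (fun ξ η₁ η₂ => δ ξ η₁ η₂) ξ₁ ξ₂)
        - coboundary ρ (fun ξ η₁ η₂ => δ ξ η₁ η₂) (n ξ₁) ξ₂
        - coboundary ρ (fun ξ η₁ η₂ => δ ξ η₁ η₂) ξ₁ (n ξ₂) := by
  funext η₁ η₂
  simp only [coboundary, deformedCoboundary, twist, deformedBracket, insertion, Pi.add_apply,
    Pi.sub_apply, map_add, map_sub, LinearMap.add_apply, LinearMap.sub_apply]
  ring

theorem isCocycle_twist_iff_isDeformedCocycle (hδ : IsCocycle ρ fun ξ η₁ η₂ => δ ξ η₁ η₂) :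
    IsCocycle ρ (twist t n fun ξ η₁ η₂ => δ ξ η₁ η₂) ↔
      IsDeformedCocycle ρ t n fun ξ η₁ η₂ => δ ξ η₁ η₂ := by
  rw [isCocycle_iff_coboundary_eq_zero] at hδ ⊢
  simp only [coboundary_twist, hδ, insertion_zero, add_zero, sub_zero, IsDeformedCocycle,
    funext_iff, Pi.zero_apply]

end BilinearCochain

theorem delta_tn_cocycle_iff_deformed_cocycle_general
    {g : Type*} [LieRing g] [LieAlgebra ℝ g]
    (n : g →ₗ[ℝ] g)
    (δ : g →ₗ[ℝ] Module.Dual ℝ g →ₗ[ℝ] Module.Dual ℝ g →ₗ[ℝ] ℝ)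
    -- coadjoint action
    (coad : g → Module.Dual ℝ g → Module.Dual ℝ g)
    -- δ is a 1-cocycle for ad^{(2)}
    (hcocycle : ∀ (ξ₁ ξ₂ : g) (η₁ η₂ : Module.Dual ℝ g),
      δ ⁅ξ₁, ξ₂⁆ η₁ η₂
        = δ ξ₂ (coad ξ₁ η₁) η₂ + δ ξ₂ η₁ (coad ξ₁ η₂)
          - δ ξ₁ (coad ξ₂ η₁) η₂ - δ ξ₁ η₁ (coad ξ₂ η₂))
    -- the deformed cochain δ_{ᵗn}
    (dtn : g → Module.Dual ℝ g → Module.Dual ℝ g → ℝ)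
    (hdtn : ∀ ξ η₁ η₂, dtn ξ η₁ η₂
      = δ ξ (n.dualMap η₁) η₂ + δ ξ η₁ (n.dualMap η₂) - δ (n ξ) η₁ η₂) :
    -- δ_{ᵗn} is a 1-cocycle for ad^{(2)} iff δ is a 1-cocycle for the
    -- deformed cohomology
    (∀ (ξ₁ ξ₂ : g) (η₁ η₂ : Module.Dual ℝ g),
      dtn ⁅ξ₁, ξ₂⁆ η₁ η₂
        = dtn ξ₂ (coad ξ₁ η₁) η₂ + dtn ξ₂ η₁ (coad ξ₁ η₂)
          - dtn ξ₁ (coad ξ₂ η₁) η₂ - dtn ξ₁ η₁ (coad ξ₂ η₂))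
    ↔
    (∀ (ξ₁ ξ₂ : g) (η₁ η₂ : Module.Dual ℝ g),
      (δ ξ₂ (n.dualMap (coad ξ₁ η₁) - coad ξ₁ (n.dualMap η₁)) η₂
          + δ ξ₂ η₁ (n.dualMap (coad ξ₁ η₂) - coad ξ₁ (n.dualMap η₂)))
        - (δ ξ₁ (n.dualMap (coad ξ₂ η₁) - coad ξ₂ (n.dualMap η₁)) η₂
          + δ ξ₁ η₁ (n.dualMap (coad ξ₂ η₂) - coad ξ₂ (n.dualMap η₂)))
        + (δ ξ₂ (coad (n ξ₁) η₁) η₂ + δ ξ₂ η₁ (coad (n ξ₁) η₂))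
        - (δ ξ₁ (coad (n ξ₂) η₁) η₂ + δ ξ₁ η₁ (coad (n ξ₂) η₂))
        - δ (⁅n ξ₁, ξ₂⁆ + ⁅ξ₁, n ξ₂⁆ - n ⁅ξ₁, ξ₂⁆) η₁ η₂ = 0) := by
  have hdtn_eq : dtn = BilinearCochain.twist n.dualMap n fun ξ η₁ η₂ => δ ξ η₁ η₂ :=
    funext fun ξ => funext fun η₁ => funext fun η₂ => hdtn ξ η₁ η₂
  subst hdtn_eq
  exact BilinearCochain.isCocycle_twist_iff_isDeformedCocycle coad n.dualMap n δ hcocycle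

/-- For a Lie bialgebra `(g,[·,·],δ)` and a Nijenhuis operator `n`, the
deformed cochain `δ_{ᵗn} = ι_{ᵗn}∘δ − δ∘n` is a 1-cocycle for `ad^{(2)}` iff
`δ` is a 1-cocycle in the deformed cohomology. -/
theorem delta_tn_cocycle_iff_deformed_cocycle
    {g : Type*} [LieRing g] [LieAlgebra ℝ g] [FiniteDimensional ℝ g]
    (n : g →ₗ[ℝ] g)
    (hN : ∀ x y : g, n (⁅n x, y⁆ + ⁅x, n y⁆ - n ⁅x, y⁆) = ⁅n x, n y⁆)
    (δ : g →ₗ[ℝ] Module.Dual ℝ g →ₗ[ℝ] Module.Dual ℝ g →ₗ[ℝ] ℝ)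
    (hskew : ∀ ξ η₁ η₂, δ ξ η₁ η₂ = - δ ξ η₂ η₁)
    -- the transpose of δ is a Lie bracket on g*
    (brD : Module.Dual ℝ g → Module.Dual ℝ g → Module.Dual ℝ g)
    (hbrD : ∀ η₁ η₂ ξ, brD η₁ η₂ ξ = δ ξ η₁ η₂)
    (hJacD : ∀ η₁ η₂ η₃,
      brD (brD η₁ η₂) η₃ + brD (brD η₃ η₁) η₂ + brD (brD η₂ η₃) η₁ = 0)
    -- coadjoint action
    (coad : g → Module.Dual ℝ g → Module.Dual ℝ g)
    (hcoad : ∀ ξ η ζ, coad ξ η ζ = - η ⁅ξ, ζ⁆)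
    -- δ is a 1-cocycle for ad^{(2)}
    (hcocycle : ∀ (ξ₁ ξ₂ : g) (η₁ η₂ : Module.Dual ℝ g),
      δ ⁅ξ₁, ξ₂⁆ η₁ η₂
        = δ ξ₂ (coad ξ₁ η₁) η₂ + δ ξ₂ η₁ (coad ξ₁ η₂)
          - δ ξ₁ (coad ξ₂ η₁) η₂ - δ ξ₁ η₁ (coad ξ₂ η₂))
    -- the deformed cochain δ_{ᵗn}
    (dtn : g → Module.Dual ℝ g → Module.Dual ℝ g → ℝ)
    (hdtn : ∀ ξ η₁ η₂, dtn ξ η₁ η₂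
      = δ ξ (n.dualMap η₁) η₂ + δ ξ η₁ (n.dualMap η₂) - δ (n ξ) η₁ η₂) :
    -- δ_{ᵗn} is a 1-cocycle for ad^{(2)} iff δ is a 1-cocycle for the
    -- deformed cohomology
    (∀ (ξ₁ ξ₂ : g) (η₁ η₂ : Module.Dual ℝ g),
      dtn ⁅ξ₁, ξ₂⁆ η₁ η₂
        = dtn ξ₂ (coad ξ₁ η₁) η₂ + dtn ξ₂ η₁ (coad ξ₁ η₂)
          - dtn ξ₁ (coad ξ₂ η₁) η₂ - dtn ξ₁ η₁ (coad ξ₂ η₂))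
    ↔
    (∀ (ξ₁ ξ₂ : g) (η₁ η₂ : Module.Dual ℝ g),
      (δ ξ₂ (n.dualMap (coad ξ₁ η₁) - coad ξ₁ (n.dualMap η₁)) η₂
          + δ ξ₂ η₁ (n.dualMap (coad ξ₁ η₂) - coad ξ₁ (n.dualMap η₂)))
        - (δ ξ₁ (n.dualMap (coad ξ₂ η₁) - coad ξ₂ (n.dualMap η₁)) η₂
          + δ ξ₁ η₁ (n.dualMap (coad ξ₂ η₂) - coad ξ₂ (n.dualMap η₂)))
        + (δ ξ₂ (coad (n ξ₁) η₁) η₂ + δ ξ₂ η₁ (coad (n ξ₁) η₂))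
        - (δ ξ₁ (coad (n ξ₂) η₁) η₂ + δ ξ₁ η₁ (coad (n ξ₂) η₂))
        - δ (⁅n ξ₁, ξ₂⁆ + ⁅ξ₁, n ξ₂⁆ - n ⁅ξ₁, ξ₂⁆) η₁ η₂ = 0) :=
  delta_tn_cocycle_iff_deformed_cocycle_general n δ coad hcocycle dtn hdtn
end
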